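/- arXiv:2404.12221 — 4 statements merged into one kernel-verified Lean document; each statement's English description precedes it below -/
import Mathlib

section
/- Let $A$ be a commutative algebra over a field $k$, and let $\{I_i \mid i \in \Lambda\}$ be a family of ideals of $A$ indexed by a downward directed set $\Lambda$ such that $i \le j$ implies $I_i \subseteq I_j$. Let $I = \bigcap_{i \in \Lambda} I_i$. Then $A \otimes_k I + I \otimes_k A = \bigcap_{i \in \Lambda} (A \otimes_k I_i + I_i \otimes_k A)$ as $k$-submodules of $A \otimes_k A$. -/
open TensorProduct

/-- The image of `A ⊗[k] J` in `A ⊗[k] A`, i.e. the `k`-submodule of `A ⊗[k] A`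
spanned by elementary tensors `a ⊗ x` with `x ∈ J`. -/
noncomputable def tensorIdealRight (k A : Type) [Field k] [CommRing A] [Algebra k A]
    (J : Ideal A) : Submodule k (A ⊗[k] A) :=
  LinearMap.range (TensorProduct.map (LinearMap.id : A →ₗ[k] A)
    (J.restrictScalars k).subtype)

/-- The image of `J ⊗[k] A` in `A ⊗[k] A`, i.e. the `k`-submodule of `A ⊗[k] A`
spanned by elementary tensors `x ⊗ a` with `x ∈ J`. -/
noncomputable def tensorIdealLeft (k A : Type) [Field k] [CommRing A] [Algebra k A]
    (J : Ideal A) : Submodule k (A ⊗[k] A) :=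
  LinearMap.range (TensorProduct.map (J.restrictScalars k).subtype
    (LinearMap.id : A →ₗ[k] A))

open LinearMap in
/-- Key lemma: if `y : V ⊗ V` is killed by `map (f i) (f i)` for a family of linear maps
whose kernels are downward directed with trivial intersection, then `y = 0`. -/
lemma key_tensor_vanish (k V Λ : Type) [Field k] [AddCommGroup V] [Module k V]
    [Nonempty Λ] (W : Λ → Type) [∀ i, AddCommGroup (W i)] [∀ i, Module k (W i)]
    (f : ∀ i, V →ₗ[k] W i)
    (hdir : ∀ i j : Λ, ∃ l, ker (f l) ≤ ker (f i) ∧ ker (f l) ≤ ker (f j))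
    (hbot : ⨅ i, ker (f i) = ⊥)
    (y : V ⊗[k] V) (hy : ∀ i, TensorProduct.map (f i) (f i) y = 0) : y = 0 := by
  classical
  obtain ⟨s, rfl⟩ := TensorProduct.exists_finset y
  set S : Submodule k V :=
    Submodule.span k ((s.image Prod.fst ∪ s.image Prod.snd : Finset V) : Set V) with hSdef
  have hmem1 : ∀ p ∈ s, p.1 ∈ S := fun p hp => Submodule.subset_span
    (Finset.mem_coe.mpr (Finset.mem_union_left _ (Finset.mem_image_of_mem Prod.fst hp)))
  have hmem2 : ∀ p ∈ s, p.2 ∈ S := fun p hp => Submodule.subset_span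
    (Finset.mem_coe.mpr (Finset.mem_union_right _ (Finset.mem_image_of_mem Prod.snd hp)))
  -- find index minimizing finrank of S ⊓ ker (f i)
  have hne : (Set.range fun i => Module.finrank k (S ⊓ ker (f i) : Submodule k V)).Nonempty :=
    Set.range_nonempty _
  obtain ⟨i₀, hi₀⟩ := Nat.sInf_mem hne
  have hmin : ∀ j, Module.finrank k (S ⊓ ker (f i₀) : Submodule k V)
      ≤ Module.finrank k (S ⊓ ker (f j) : Submodule k V) := by
    intro j
    rw [show Module.finrank k (S ⊓ ker (f i₀) : Submodule k V) = _ from hi₀]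
    exact Nat.sInf_le ⟨j, rfl⟩
  have hbot' : S ⊓ ker (f i₀) = ⊥ := by
    rw [← le_bot_iff, ← hbot]
    refine le_iInf fun j => ?_
    obtain ⟨l, hl₁, hl₂⟩ := hdir i₀ j
    have hle : S ⊓ ker (f l) ≤ S ⊓ ker (f i₀) := inf_le_inf_left S hl₁
    have heq := Submodule.eq_of_le_of_finrank_le hle (hmin l)
    calc S ⊓ ker (f i₀) = S ⊓ ker (f l) := heq.symm
      _ ≤ ker (f l) := inf_le_right
      _ ≤ ker (f j) := hl₂
  have hinj : Function.Injective ((f i₀).comp S.subtype) := by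
    rw [← LinearMap.ker_eq_bot, LinearMap.ker_comp, Submodule.eq_bot_iff]
    rintro ⟨v, hv⟩ hv'
    have hv0 : v ∈ S ⊓ ker (f i₀) := ⟨hv, hv'⟩
    rw [hbot'] at hv0
    exact Subtype.ext hv0
  set z : S ⊗[k] S := ∑ p ∈ s.attach,
    (⟨p.1.1, hmem1 p.1 p.2⟩ : S) ⊗ₜ[k] (⟨p.1.2, hmem2 p.1 p.2⟩ : S) with hzdef
  have hz : TensorProduct.map S.subtype S.subtype z = ∑ p ∈ s, p.1 ⊗ₜ[k] p.2 := by
    rw [hzdef, map_sum, ← Finset.sum_attach s (fun p => p.1 ⊗ₜ[k] p.2)]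
    exact Finset.sum_congr rfl fun p _ => rfl
  have hinj2 : Function.Injective
      (TensorProduct.map ((f i₀).comp S.subtype) ((f i₀).comp S.subtype)) := by
    rw [← LinearMap.lTensor_comp_rTensor, LinearMap.coe_comp]
    exact (Module.Flat.lTensor_preserves_injective_linearMap _ hinj).comp
      (Module.Flat.rTensor_preserves_injective_linearMap _ hinj)
  have h0 : TensorProduct.map ((f i₀).comp S.subtype) ((f i₀).comp S.subtype) z = 0 := by
    rw [TensorProduct.map_comp, LinearMap.comp_apply, hz, hy i₀]
  have hz0 : z = 0 := hinj2 (by rw [h0, map_zero])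
  rw [← hz, hz0, map_zero]

open LinearMap in
/-- The submodule `A ⊗ P + P ⊗ A` is the kernel of the map to `(A/P) ⊗ (A/P)`. -/
lemma ker_map_mkQ (k A : Type) [Field k] [CommRing A] [Algebra k A] (P : Submodule k A) :
    ker (TensorProduct.map P.mkQ P.mkQ)
      = LinearMap.range (TensorProduct.map (LinearMap.id : A →ₗ[k] A) P.subtype)
        ⊔ LinearMap.range (TensorProduct.map P.subtype (LinearMap.id : A →ₗ[k] A)) := by
  rw [TensorProduct.map_ker (LinearMap.exact_subtype_mkQ P) (Submodule.mkQ_surjective P)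
    (LinearMap.exact_subtype_mkQ P) (Submodule.mkQ_surjective P)]
  rfl

open LinearMap in
/-- Let `A` be a commutative algebra over a field `k` and `{I i | i ∈ Λ}` a family of
ideals of `A` indexed by a downward directed set `Λ`, monotone in the index.  With
`I = ⋂ i, I i` one has `A ⊗ I + I ⊗ A = ⋂ i (A ⊗ I i + I i ⊗ A)` inside `A ⊗[k] A`. -/
theorem directed_inter_tensor_ideal (k A : Type) [Field k] [CommRing A] [Algebra k A]
    (Λ : Type) [PartialOrder Λ] [Nonempty Λ]
    (hdir : ∀ i j : Λ, ∃ l : Λ, l ≤ i ∧ l ≤ j)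
    (I : Λ → Ideal A) (hmono : ∀ i j : Λ, i ≤ j → I i ≤ I j) :
    tensorIdealRight k A (⨅ i, I i) ⊔ tensorIdealLeft k A (⨅ i, I i)
      = ⨅ i, (tensorIdealRight k A (I i) ⊔ tensorIdealLeft k A (I i)) := by
  set N : Λ → Submodule k A := fun i => (I i).restrictScalars k with hN
  set N0 : Submodule k A := (⨅ i, I i).restrictScalars k with hN0
  have hN0le : ∀ i, N0 ≤ N i := fun i x hx => by
    have : x ∈ ⨅ i, I i := hx
    exact (Submodule.mem_iInf _).mp this i
  have hNmono : ∀ i j : Λ, i ≤ j → N i ≤ N j := fun i j hij x hx => hmono i j hij hx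
  -- rewrite both sides as kernels
  have hL : tensorIdealRight k A (⨅ i, I i) ⊔ tensorIdealLeft k A (⨅ i, I i)
      = ker (TensorProduct.map N0.mkQ N0.mkQ) := (ker_map_mkQ k A N0).symm
  have hR : ∀ i, tensorIdealRight k A (I i) ⊔ tensorIdealLeft k A (I i)
      = ker (TensorProduct.map (N i).mkQ (N i).mkQ) := fun i => (ker_map_mkQ k A (N i)).symm
  rw [hL]
  simp_rw [hR]
  -- the induced maps p i : A ⧸ N0 → A ⧸ N i
  have hle' : ∀ i, N0 ≤ ker (N i).mkQ := fun i => by rw [Submodule.ker_mkQ]; exact hN0le i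
  set p : ∀ i, (A ⧸ N0) →ₗ[k] (A ⧸ N i) := fun i => N0.liftQ (N i).mkQ (hle' i) with hp
  have hpq : ∀ i, (p i).comp N0.mkQ = (N i).mkQ := fun i => Submodule.liftQ_mkQ _ _ _
  have hkerp : ∀ i, ker (p i) = (N i).map N0.mkQ := fun i => by
    rw [hp]
    rw [Submodule.ker_liftQ, Submodule.ker_mkQ]
  apply le_antisymm
  · refine le_iInf fun i => fun x hx => ?_
    have hx0 : TensorProduct.map N0.mkQ N0.mkQ x = 0 := hx
    have : TensorProduct.map (N i).mkQ (N i).mkQ x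
        = TensorProduct.map (p i) (p i) (TensorProduct.map N0.mkQ N0.mkQ x) := by
      rw [← LinearMap.comp_apply, ← TensorProduct.map_comp, hpq i]
    rw [LinearMap.mem_ker, this, hx0, map_zero]
  · intro x hx
    rw [Submodule.mem_iInf] at hx
    rw [LinearMap.mem_ker]
    refine key_tensor_vanish k (A ⧸ N0) Λ (fun i => A ⧸ N i) p ?_ ?_ _ ?_
    · intro i j
      obtain ⟨l, hli, hlj⟩ := hdir i j
      refine ⟨l, ?_, ?_⟩ <;> rw [hkerp, hkerp] <;>
        exact Submodule.map_mono (hNmono _ _ (by assumption))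
    · rw [Submodule.eq_bot_iff]
      intro y hy
      rw [Submodule.mem_iInf] at hy
      obtain ⟨a, rfl⟩ := N0.mkQ_surjective y
      have ha : ∀ i, a ∈ N i := by
        intro i
        have := hy i
        rw [hkerp i] at this
        have h2 : a ∈ Submodule.comap N0.mkQ ((N i).map N0.mkQ) := this
        rw [Submodule.comap_map_mkQ] at h2
        rw [sup_eq_right.mpr (hN0le i)] at h2
        exact h2
      have : a ∈ N0 := by
        change a ∈ (⨅ i, I i)
        exact (Submodule.mem_iInf _).mpr fun i => ha i
      rwa [Submodule.mkQ_apply, Submodule.Quotient.mk_eq_zero]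
    · intro i
      have hxi : TensorProduct.map (N i).mkQ (N i).mkQ x = 0 := hx i
      rw [← LinearMap.comp_apply, ← TensorProduct.map_comp, hpq i]
      exact hxi
end

section
/- Let $k$ be a field, $A$ a $k$-algebra, and $\{I_i \mid i \in \Lambda\}$ a family of ideals of $A$ with $I = \bigcap_{i \in \Lambda} I_i$. If $x \in A \otimes_k A$ satisfies $x \in A \otimes_k I_i + I \otimes_k A$ for every $i \in \Lambda$, then $x \in A \otimes_k I + I \otimes_k A$. -/
open TensorProduct

/-!
By right exactness, the kernel of `A ⊗ A → (A ⧸ I) ⊗ A` is `I ⊗ A`, and this map sends `A ⊗ J`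
onto `(A ⧸ I) ⊗ J`. So it suffices to show `⋂ᵢ (Q ⊗ Iᵢ) = Q ⊗ I` for `Q = A ⧸ I`. As `Q` is a
vector space it has a basis, and an element of `Q ⊗ A` lies in `Q ⊗ J` exactly when all of its
coordinates in `A` lie in `J`.
-/

open LinearMap Submodule

theorem mem_range_lTensor_subtype_iff {R M A ι : Type*} [CommRing R] [AddCommGroup M]
    [Module R M] [AddCommGroup A] [Module R A] [DecidableEq ι] (b : Module.Basis ι R M)
    (N : Submodule R A) (y : M ⊗[R] A) :
    y ∈ range (lTensor M N.subtype) ↔ ∀ i, equivFinsuppOfBasisLeft b y i ∈ N := by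
  constructor
  · rintro ⟨z, rfl⟩ i
    induction z using TensorProduct.induction_on with
    | zero => simp
    | tmul m n =>
      rw [lTensor_tmul, equivFinsuppOfBasisLeft_apply_tmul_apply]
      exact N.smul_mem _ n.2
    | add u v hu hv =>
      rw [map_add, map_add, Finsupp.add_apply]
      exact N.add_mem hu hv
  · intro h
    rw [← (equivFinsuppOfBasisLeft b).symm_apply_apply y, equivFinsuppOfBasisLeft_symm_apply]
    exact Submodule.finsuppSum_mem _ _ _ _ fun i _ ↦ ⟨b i ⊗ₜ ⟨_, h i⟩, rfl⟩

theorem range_lTensor_subtype_iInf {R M A : Type*} {Λ : Sort*} [CommRing R] [AddCommGroup M]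
    [Module R M] [Module.Free R M] [AddCommGroup A] [Module R A] (N : Λ → Submodule R A) :
    range (lTensor M (⨅ i, N i).subtype) = ⨅ i, range (lTensor M (N i).subtype) := by
  classical
  ext y
  simp only [mem_iInf, mem_range_lTensor_subtype_iff (Module.Free.chooseBasis R M)]
  exact forall_comm

theorem map_rTensor_range_lTensor {R M M' N A : Type*} [CommRing R] [AddCommGroup M]
    [Module R M] [AddCommGroup M'] [Module R M'] [AddCommGroup N] [Module R N]
    [AddCommGroup A] [Module R A] {g : M →ₗ[R] M'} (hg : Function.Surjective g)
    (f : N →ₗ[R] A) :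
    map (rTensor A g) (range (lTensor M f)) = range (lTensor M' f) := by
  rw [← range_comp, rTensor_comp_lTensor, ← lTensor_comp_rTensor, range_comp,
    range_eq_top.mpr (rTensor_surjective N hg), Submodule.map_top]

theorem iInf_range_lTensor_sup_range_rTensor {k M A : Type*} {Λ : Sort*} [Field k] [AddCommGroup M]
    [Module k M] [AddCommGroup A] [Module k A] (L : Submodule k M)
    (N : Λ → Submodule k A) :
    ⨅ i, (range (lTensor M (N i).subtype) ⊔ range (rTensor A L.subtype)) =
      range (lTensor M (⨅ i, N i).subtype) ⊔ range (rTensor A L.subtype) := by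
  simp only [← rTensor_mkQ, ← comap_map_eq, map_rTensor_range_lTensor L.mkQ_surjective]
  rw [← comap_iInf, range_lTensor_subtype_iInf]

theorem mem_tensor_inter_of_forall_general (k A : Type) [Field k] [CommRing A] [Algebra k A]
    (Λ : Type) (I : Λ → Ideal A) (x : A ⊗[k] A)
    (hx : ∀ i : Λ, x ∈ tensorIdealRight k A (I i) ⊔ tensorIdealLeft k A (⨅ j, I j)) :
    x ∈ tensorIdealRight k A (⨅ j, I j) ⊔ tensorIdealLeft k A (⨅ j, I j) := by
  have key := iInf_range_lTensor_sup_range_rTensor ((⨅ j, I j).restrictScalars k)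
    fun i ↦ (I i).restrictScalars k
  rw [← restrictScalars_iInf] at key
  exact key ▸ mem_iInf _ |>.mpr hx

/-- Let `{I i | i ∈ Λ}` be a nonempty family of ideals of a `k`-algebra `A`, with
intersection `I`.  If `x ∈ A ⊗ (I i) + I ⊗ A` for every `i`, then `x ∈ A ⊗ I + I ⊗ A`. -/
theorem mem_tensor_inter_of_forall (k A : Type) [Field k] [CommRing A] [Algebra k A]
    (Λ : Type) [Nonempty Λ] (I : Λ → Ideal A) (x : A ⊗[k] A)
    (hx : ∀ i : Λ, x ∈ tensorIdealRight k A (I i) ⊔ tensorIdealLeft k A (⨅ j, I j)) :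
    x ∈ tensorIdealRight k A (⨅ j, I j) ⊔ tensorIdealLeft k A (⨅ j, I j) :=
  mem_tensor_inter_of_forall_general k A Λ I x hx
end

section
/- Let $k$ be a field and $A$ a Hopf algebra over $k$ with comultiplication $\overline{m} : A \to A \otimes_k A$. Let $\{I_i \mid i \in \Lambda\}$ be a downward directed family of Hopf ideals of $A$ (so each $I_i$ satisfies $\overline{m}(I_i) \subseteq A \otimes_k I_i + I_i \otimes_k A$), and let $I = \bigcap_{i \in \Lambda} I_i$. Then $\overline{m}(I) \subseteq A \otimes_k I + I \otimes_k A$, i.e. the comultiplication descends to a well-defined map $A/I \to A/I \otimes_k A/I$. -/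
open TensorProduct

/-! Over a field, the kernel of `f ⊗ g` is `M ⊗ ker g + ker f ⊗ P`, so it only depends on
`ker f` and `ker g`, monotonically. The element `Δ x` lies in the image of `W ⊗ W` for a
finite-dimensional subspace `W`, and the traces `I i ∩ W` form a downward directed family of
subspaces of `W`, which therefore attains its infimum `I ∩ W` at some `i₀`. Pulled back to
`W ⊗ W`, the condition for `I i₀` is then the condition for `I`. -/

theorem Directed.exists_forall_le_of_wellFoundedLT {α ι : Type*} [Preorder α] [WellFoundedLT α]
    [Nonempty ι] {f : ι → α} (hf : Directed (· ≥ ·) f) : ∃ i, ∀ j, f i ≤ f j := by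
  obtain ⟨_, ⟨i, rfl⟩, hmin⟩ :=
    WellFoundedLT.exists_minimal ‹_› (Set.range f) (Set.range_nonempty f)
  exact ⟨i, fun j ↦ hf.directedOn_range.le_of_minimal ⟨⟨i, rfl⟩, hmin⟩ ⟨j, rfl⟩⟩

namespace TensorProduct

open LinearMap

variable {k M N P Q : Type*} [Field k] [AddCommGroup M] [Module k M] [AddCommGroup N] [Module k N]
  [AddCommGroup P] [Module k P] [AddCommGroup Q] [Module k Q]

theorem ker_map_of_field (f : M →ₗ[k] N) (g : P →ₗ[k] Q) :
    ker (map f g) = range (lTensor M (ker g).subtype) ⊔ range (rTensor P (ker f).subtype) := by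
  have hf : (ker f).liftQ f le_rfl ∘ₗ (ker f).mkQ = f := (ker f).liftQ_mkQ f le_rfl
  have hg : (ker g).liftQ g le_rfl ∘ₗ (ker g).mkQ = g := (ker g).liftQ_mkQ g le_rfl
  -- every vector space is flat
  have hinj : Function.Injective (map ((ker f).liftQ f le_rfl) ((ker g).liftQ g le_rfl)) :=
    map_injective_of_flat_flat _ _ (ker_eq_bot.mp ((ker f).ker_liftQ_eq_bot' f rfl))
      (ker_eq_bot.mp ((ker g).ker_liftQ_eq_bot' g rfl))
  rw [← hf, ← hg, map_comp, ker_comp_of_ker_eq_bot _ (ker_eq_bot.mpr hinj)]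
  exact map_ker (exact_subtype_mkQ _) (Submodule.mkQ_surjective _) (exact_subtype_mkQ _)
    (Submodule.mkQ_surjective _)

theorem ker_map_mono {N' Q' : Type*} [AddCommGroup N'] [Module k N'] [AddCommGroup Q']
    [Module k Q'] {f : M →ₗ[k] N} {f' : M →ₗ[k] N'} {g : P →ₗ[k] Q} {g' : P →ₗ[k] Q'}
    (hf : ker f ≤ ker f') (hg : ker g ≤ ker g') : ker (map f g) ≤ ker (map f' g') := by
  rw [ker_map_of_field, ker_map_of_field]
  refine sup_le_sup ?_ ?_
  · rw [← Submodule.subtype_comp_inclusion _ _ hg, lTensor_comp]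
    exact range_comp_le_range _ _
  · rw [← Submodule.subtype_comp_inclusion _ _ hf, rTensor_comp]
    exact range_comp_le_range _ _

theorem map_mkQ_iInf_apply_eq_zero {V ι : Type*} [AddCommGroup V] [Module k V] [Nonempty ι] {J : ι → Submodule k V}
    (hJ : Directed (· ≥ ·) J) {t : V ⊗[k] V} (ht : ∀ i, map (J i).mkQ (J i).mkQ t = 0) :
    map (⨅ i, J i).mkQ (⨅ i, J i).mkQ t = 0 := by
  obtain ⟨M', N', _, _, hsub⟩ :=
    exists_finite_submodule_of_setFinite {t} (Set.finite_singleton t)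
  set W := M' ⊔ N'
  obtain ⟨s, rfl⟩ : t ∈ range (map W.subtype W.subtype) :=
    range_mapIncl_mono le_sup_left le_sup_right (hsub rfl)
  have hW : Directed (· ≥ ·) fun i ↦ (J i).comap W.subtype :=
    hJ.mono_comp (· ≥ ·) (g := Submodule.comap W.subtype) fun _ _ h ↦ Submodule.comap_mono h
  obtain ⟨i₀, hi₀⟩ := hW.exists_forall_le_of_wellFoundedLT
  have hker : ker ((J i₀).mkQ ∘ₗ W.subtype) ≤ ker ((⨅ i, J i).mkQ ∘ₗ W.subtype) := by
    simpa only [ker_comp, Submodule.ker_mkQ, Submodule.comap_iInf] using le_iInf hi₀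
  have hs : map ((J i₀).mkQ ∘ₗ W.subtype) ((J i₀).mkQ ∘ₗ W.subtype) s = 0 := by
    rw [map_comp, comp_apply]
    exact ht i₀
  simpa only [mem_ker, map_comp, comp_apply] using ker_map_mono hker hker hs

end TensorProduct

theorem tensorIdealRight_sup_tensorIdealLeft_eq_ker (k A : Type) [Field k] [CommRing A] [Algebra k A]
    (J : Ideal A) :
    tensorIdealRight k A J ⊔ tensorIdealLeft k A J =
      LinearMap.ker (map (J.restrictScalars k).mkQ (J.restrictScalars k).mkQ) := by
  rw [ker_map_of_field, Submodule.ker_mkQ]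
  rfl

theorem comul_inter_hopfIdeal_general (k A : Type) [Field k] [CommRing A] [HopfAlgebra k A]
    (Λ : Type) [PartialOrder Λ] [Nonempty Λ]
    (hdir : ∀ i j : Λ, ∃ l : Λ, l ≤ i ∧ l ≤ j)
    (I : Λ → Ideal A) (hmono : ∀ i j : Λ, i ≤ j → I i ≤ I j)
    (hcoideal : ∀ i : Λ, ∀ x ∈ I i,
      Coalgebra.comul (R := k) x ∈ tensorIdealRight k A (I i) ⊔ tensorIdealLeft k A (I i)) :
    ∀ x ∈ (⨅ i, I i : Ideal A),
      Coalgebra.comul (R := k) x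
        ∈ tensorIdealRight k A (⨅ i, I i) ⊔ tensorIdealLeft k A (⨅ i, I i) := by
  intro x hx
  have hdirected : Directed (· ≥ ·) fun i ↦ (I i).restrictScalars k := fun i j ↦ by
    obtain ⟨l, hli, hlj⟩ := hdir i j
    exact ⟨l, hmono l i hli, hmono l j hlj⟩
  have hker (i : Λ) := tensorIdealRight_sup_tensorIdealLeft_eq_ker k A (I i) ▸
    hcoideal i x (Submodule.mem_iInf I |>.mp hx i)
  rw [tensorIdealRight_sup_tensorIdealLeft_eq_ker, Submodule.restrictScalars_iInf]
  exact map_mkQ_iInf_apply_eq_zero hdirected hker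

/-- Let `A` be a Hopf algebra over a field `k` with comultiplication `Δ`, and let
`{I i | i ∈ Λ}` be a downward directed family of Hopf ideals of `A` (each satisfying
`Δ(I i) ⊆ A ⊗ I i + I i ⊗ A`, `ε(I i) = 0` and `S(I i) ⊆ I i`).  Then the intersection
`I = ⋂ i, I i` satisfies `Δ(I) ⊆ A ⊗ I + I ⊗ A`, i.e. the comultiplication descends to
a well-defined map `A/I → A/I ⊗ A/I`. -/
theorem comul_inter_hopfIdeal (k A : Type) [Field k] [CommRing A] [HopfAlgebra k A]
    (Λ : Type) [PartialOrder Λ] [Nonempty Λ]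
    (hdir : ∀ i j : Λ, ∃ l : Λ, l ≤ i ∧ l ≤ j)
    (I : Λ → Ideal A) (hmono : ∀ i j : Λ, i ≤ j → I i ≤ I j)
    (hcoideal : ∀ i : Λ, ∀ x ∈ I i,
      Coalgebra.comul (R := k) x ∈ tensorIdealRight k A (I i) ⊔ tensorIdealLeft k A (I i))
    (hcounit : ∀ i : Λ, ∀ x ∈ I i, Coalgebra.counit (R := k) x = 0)
    (hantipode : ∀ i : Λ, ∀ x ∈ I i, (HopfAlgebra.antipode (R := k) : A →ₗ[k] A) x ∈ I i) :
    ∀ x ∈ (⨅ i, I i : Ideal A),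
      Coalgebra.comul (R := k) x
        ∈ tensorIdealRight k A (⨅ i, I i) ⊔ tensorIdealLeft k A (⨅ i, I i) :=
  comul_inter_hopfIdeal_general k A Λ hdir I hmono hcoideal
end

section
/- Let $k$ be an imperfect field of characteristic $p > 0$ and $a \in k \setminus k^p$. Let $\mathfrak{g}$ be the 3-dimensional restricted Lie algebra over $k$ with basis $X, Y, Z$ satisfying $[X,Y]=[X,Z]=0$, $[Z,Y]=Y$, $X^{[p]}=X$, $Y^{[p]}=aX$, $Z^{[p]}=Z$. Then $\mathfrak{g}$ is solvable, not nilpotent, and contains no nonzero $p$-nilpotent elements. -/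
attribute [local instance 100] LieRing.ofAssociativeRing

/-!
Since `X = 1` is central and `⁅Z, Y⁆ = Y`, every bracket of two elements of the linear span of
`X, Y, Z` is a multiple of `Y`. Hence this span is already the Lie span, its derived algebra
`k ∙ Y` is abelian, and `ad Z` fixes `Y ≠ 0`, which rules out nilpotency.

If `M = x • X + y • Y + z • Z` is nilpotent then so is `ad M`, which has `Y` as an eigenvector
with eigenvalue `z`; so `z = 0`. Then `M` is a sum of two commuting matrices and `Y ^ p = a • 1`,
so `M ^ p = (x ^ p + a * y ^ p) • 1`. This scalar is nilpotent, hence zero, and as `a` is not a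
`p`-th power, `x = y = 0`.
-/

open Submodule in
theorem LieSubalgebra.lie_mem_of_mem_span {R L : Type*} [CommRing R] [LieRing L]
    [LieAlgebra R L] {s : Set L} {N : Submodule R L} (h : ∀ x ∈ s, ∀ y ∈ s, ⁅x, y⁆ ∈ N)
    {x y : L} (hx : x ∈ span R s) (hy : y ∈ span R s) : ⁅x, y⁆ ∈ N := by
  induction hx, hy using span_induction₂ with
  | mem_mem x y hx hy => exact h x hx y hy
  | zero_left y hy => simp
  | zero_right x hx => simp
  | add_left x y z _ _ _ hx hy => simpa using add_mem hx hy
  | add_right x y z _ _ _ hx hy => simpa using add_mem hx hy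
  | smul_left r x y _ _ hxy => simpa using N.smul_mem r hxy
  | smul_right r x y _ _ hxy => simpa using N.smul_mem r hxy

open Submodule in
theorem LieSubalgebra.coe_lieSpan_eq_span_of_forall_lie_mem {R L : Type*} [CommRing R]
    [LieRing L] [LieAlgebra R L] {s : Set L} (h : ∀ x ∈ s, ∀ y ∈ s, ⁅x, y⁆ ∈ span R s) :
    lieSpan R L s = span R s := by
  refine le_antisymm ?_ submodule_span_le_lieSpan
  change _ ≤ ({ span R s with lie_mem' := lie_mem_of_mem_span h } : LieSubalgebra R L)
  rw [lieSpan_le]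
  exact subset_span

theorem LieSubalgebra.isSolvable_of_lie_mem_span_singleton {R L : Type*} [CommRing R]
    [LieRing L] [LieAlgebra R L] (K : LieSubalgebra R L) (y : L)
    (h : ∀ u ∈ K, ∀ v ∈ K, ⁅u, v⁆ ∈ R ∙ y) : LieAlgebra.IsSolvable K := by
  have hD : ∀ w ∈ LieAlgebra.derivedSeries R K 1, (w : L) ∈ R ∙ y := by
    intro w hw
    replace hw : w ∈ (LieAlgebra.derivedSeries R K 1 : LieSubalgebra R K).toSubmodule := hw
    rw [LieAlgebra.coe_derivedSeries_one_eq] at hw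
    induction hw using Submodule.span_induction with
    | mem w hw =>
      obtain ⟨u, v, rfl⟩ := hw
      exact h u u.2 v v.2
    | zero => simp
    | add u v _ _ hu hv => simpa using add_mem hu hv
    | smul r u _ hu => simpa using Submodule.smul_mem _ r hu
  refine LieAlgebra.IsSolvable.mk (R := R) (k := 2) ?_
  rw [LieAlgebra.derivedSeries_def, LieAlgebra.derivedSeriesOfIdeal_succ,
    LieSubmodule.lie_eq_bot_iff]
  intro u hu v hv
  obtain ⟨c, hc⟩ := Submodule.mem_span_singleton.mp (hD u hu)
  obtain ⟨d, hd⟩ := Submodule.mem_span_singleton.mp (hD v hv)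
  apply Subtype.ext
  simp [← hc, ← hd]

theorem Module.End.eq_zero_of_isNilpotent_of_apply_eq_smul {K V : Type*} [Field K]
    [AddCommGroup V] [Module K V] {f : Module.End K V} (hf : IsNilpotent f) {c : K} {v : V}
    (hv : v ≠ 0) (h : f v = c • v) : c = 0 :=
  isNilpotent_iff_eq_zero.mp <|
    (hasEigenvalue_of_hasEigenvector ⟨mem_eigenspace_iff.mpr h, hv⟩).isNilpotent_of_isNilpotent hf

theorem LieAlgebra.not_isNilpotent_of_lie_eq_self (K : Type*) {L : Type*} [Field K] [LieRing L]
    [LieAlgebra K L] {y z : L} (hy : y ≠ 0) (h : ⁅z, y⁆ = y) : ¬ LieRing.IsNilpotent L := by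
  intro hL
  obtain ⟨n, hn⟩ := LieAlgebra.nilpotent_ad_of_nilpotent_algebra K L
  have := Module.End.eq_zero_of_isNilpotent_of_apply_eq_smul ⟨n, hn z⟩ hy
    (by rw [LieAlgebra.ad_apply, h, one_smul] : ad K L z y = (1 : K) • y)
  exact one_ne_zero this

section Triple

variable {R L : Type*} [CommRing R] [LieRing L] [LieAlgebra R L] {X Y Z : L}

theorem lie_mem_span_singleton_of_mem_triple (hXY : ⁅X, Y⁆ = 0) (hXZ : ⁅X, Z⁆ = 0)
    (hZY : ⁅Z, Y⁆ = Y) :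
    ∀ u ∈ ({X, Y, Z} : Set L), ∀ v ∈ ({X, Y, Z} : Set L), ⁅u, v⁆ ∈ R ∙ Y := by
  have hYX : ⁅Y, X⁆ = 0 := by rw [← lie_skew, hXY, neg_zero]
  have hZX : ⁅Z, X⁆ = 0 := by rw [← lie_skew, hXZ, neg_zero]
  have hYZ : ⁅Y, Z⁆ = -Y := by rw [← lie_skew, hZY]
  simp only [Set.mem_insert_iff, Set.mem_singleton_iff]
  rintro u (rfl | rfl | rfl) v (rfl | rfl | rfl) <;>
    simp [hXY, hXZ, hYX, hZX, hZY, hYZ, Submodule.mem_span_singleton_self]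

theorem coe_lieSpan_triple (hXY : ⁅X, Y⁆ = 0) (hXZ : ⁅X, Z⁆ = 0) (hZY : ⁅Z, Y⁆ = Y) :
    (LieSubalgebra.lieSpan R L {X, Y, Z} : Submodule R L) = Submodule.span R {X, Y, Z} :=
  LieSubalgebra.coe_lieSpan_eq_span_of_forall_lie_mem fun u hu v hv =>
    Submodule.span_mono (by simp) (lie_mem_span_singleton_of_mem_triple hXY hXZ hZY u hu v hv)

theorem isSolvable_lieSpan_triple (hXY : ⁅X, Y⁆ = 0) (hXZ : ⁅X, Z⁆ = 0) (hZY : ⁅Z, Y⁆ = Y) :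
    LieAlgebra.IsSolvable (LieSubalgebra.lieSpan R L {X, Y, Z}) := by
  refine LieSubalgebra.isSolvable_of_lie_mem_span_singleton _ Y fun u hu v hv => ?_
  rw [← LieSubalgebra.mem_toSubmodule, coe_lieSpan_triple hXY hXZ hZY] at hu hv
  exact LieSubalgebra.lie_mem_of_mem_span (lie_mem_span_singleton_of_mem_triple hXY hXZ hZY) hu hv

end Triple

theorem eq_zero_of_pow_add_mul_pow_eq_zero {K : Type*} [Field K] {p : ℕ} [Fact p.Prime]
    [CharP K p] {a : K} (ha : ∀ b : K, b ^ p ≠ a) {x y : K} (h : x ^ p + a * y ^ p = 0) :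
    x = 0 ∧ y = 0 := by
  have hp : p ≠ 0 := (Fact.out : p.Prime).ne_zero
  by_cases hy : y = 0
  · subst hy
    rw [zero_pow hp, mul_zero, add_zero, pow_eq_zero_iff hp] at h
    exact ⟨h, rfl⟩
  · refine absurd ?_ (ha (-x / y))
    rw [div_pow, neg_pow, neg_one_pow_char, div_eq_iff (pow_ne_zero p hy)]
    linear_combination -h

theorem eq_zero_of_isNilpotent_of_mem_span {K A : Type*} [Field K] [Ring A] [Algebra K A]
    {p : ℕ} [Fact p.Prime] [CharP K p] {a : K} (ha : ∀ b : K, b ^ p ≠ a) {Y Z : A}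
    (hY : Y ^ p = a • 1) (hY0 : Y ≠ 0) (hZY : ⁅Z, Y⁆ = Y) {M : A}
    (hM : M ∈ Submodule.span K {1, Y, Z}) (hnil : IsNilpotent M) : M = 0 := by
  have : Nontrivial A := nontrivial_of_ne Y 0 hY0
  have : CharP A p := charP_of_injective_algebraMap (algebraMap K A).injective p
  obtain ⟨x, y, z, rfl⟩ := Submodule.mem_span_triple.mp hM
  have hMY : LieAlgebra.ad K A (x • 1 + y • Y + z • Z) Y = z • Y := by
    simp [(Commute.one_left Y).lie_eq, hZY]
  obtain rfl : z = 0 := Module.End.eq_zero_of_isNilpotent_of_apply_eq_smul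
    (LieAlgebra.ad_nilpotent_of_nilpotent hnil) hY0 hMY
  have hpow : (x • 1 + y • Y + (0 : K) • Z) ^ p = algebraMap K A (x ^ p + a * y ^ p) := by
    have hcomm : Commute (x • (1 : A)) (y • Y) := ((Commute.one_left Y).smul_left x).smul_right y
    rw [zero_smul, add_zero, add_pow_char_of_commute p hcomm, smul_pow, smul_pow, hY, one_pow,
      smul_smul, ← add_smul, Algebra.algebraMap_eq_smul_one, mul_comm a]
  have hscalar : IsNilpotent (x ^ p + a * y ^ p) := by
    rw [← IsNilpotent.map_iff (algebraMap K A).injective, ← hpow]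
    exact hnil.pow_of_pos (Fact.out : p.Prime).ne_zero
  obtain ⟨rfl, rfl⟩ := eq_zero_of_pow_add_mul_pow_eq_zero ha (isNilpotent_iff_eq_zero.mp hscalar)
  simp

section CyclicShift

open Matrix

variable {R : Type*} [CommRing R] (p : ℕ) (a : R)

/-- The companion matrix of `T ^ p - a`: it sends `eⱼ ↦ eⱼ₊₁` for `j < p - 1` and
`e_{p-1} ↦ a • e₀`. -/
def cyclicShift : Matrix (Fin p) (Fin p) R :=
  Matrix.of fun i j =>
    if (i : ℕ) = (j : ℕ) + 1 then 1 else if (i : ℕ) = 0 ∧ (j : ℕ) = p - 1 then a else 0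

variable (R) in
def indexDiagonal : Matrix (Fin p) (Fin p) R :=
  diagonal fun i => ((i : ℕ) : R) + 1

variable {p}

theorem cyclicShift_mulVec_single_of_lt {j : ℕ} (hj : j + 1 < p) :
    cyclicShift p a *ᵥ Pi.single ⟨j, by omega⟩ 1 = Pi.single ⟨j + 1, hj⟩ 1 := by
  ext i
  simp only [mulVec_single_one, col_apply, cyclicShift, of_apply, Pi.single_apply, Fin.ext_iff]
  split_ifs <;> first | rfl | omega

theorem cyclicShift_mulVec_single_last (hp : 0 < p) :
    cyclicShift p a *ᵥ Pi.single ⟨p - 1, by omega⟩ 1 = a • Pi.single ⟨0, hp⟩ 1 := by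
  ext i
  have := i.isLt
  simp only [mulVec_single_one, col_apply, cyclicShift, of_apply, Pi.smul_apply,
    Pi.single_apply, Fin.ext_iff, and_true, smul_eq_mul]
  split_ifs <;> first | omega | simp

theorem cyclicShift_pow_mulVec_single {i j m : ℕ} (hj : j < p) (h : i + m = j) :
    cyclicShift p a ^ m *ᵥ Pi.single ⟨i, by omega⟩ 1 = Pi.single ⟨j, hj⟩ 1 := by
  subst h
  induction m with
  | zero => rw [pow_zero, one_mulVec]; rfl
  | succ m ih =>
    rw [pow_succ', ← mulVec_mulVec, ih (by omega), cyclicShift_mulVec_single_of_lt]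
    rfl

theorem cyclicShift_pow_self : cyclicShift p a ^ p = a • 1 := by
  refine ext_of_mulVec_single fun ⟨j, hj⟩ => ?_
  -- `eⱼ` is shifted up to `e_{p-1}`, wraps around to `a • e₀`, and is shifted back up to `a • eⱼ`.
  have hsplit : cyclicShift p a ^ p =
      cyclicShift p a ^ j * (cyclicShift p a * cyclicShift p a ^ (p - 1 - j)) := by
    rw [← pow_succ', ← pow_add]
    congr 1
    omega
  rw [hsplit, ← mulVec_mulVec, ← mulVec_mulVec,
    cyclicShift_pow_mulVec_single a (by omega : p - 1 < p) (by omega),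
    cyclicShift_mulVec_single_last a (by omega), mulVec_smul,
    cyclicShift_pow_mulVec_single a hj (zero_add j), smul_mulVec, one_mulVec]

theorem cyclicShift_ne_zero [Nontrivial R] (hp : 1 < p) : cyclicShift p a ≠ 0 := by
  intro h
  simpa [cyclicShift] using congrFun₂ h ⟨1, hp⟩ ⟨0, by omega⟩

theorem lie_indexDiagonal_cyclicShift [CharP R p] :
    ⁅indexDiagonal R p, cyclicShift p a⁆ = cyclicShift p a := by
  ext i j
  have hj := j.isLt
  rw [Ring.lie_def, Matrix.sub_apply, indexDiagonal, diagonal_mul, mul_diagonal]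
  simp only [cyclicShift, of_apply]
  split_ifs with h1 h2
  · rw [h1]
    push_cast
    ring
  · have hlast : ((p - 1 : ℕ) : R) + 1 = 0 := by
      rw [← Nat.cast_add_one, Nat.sub_add_cancel (by omega), CharP.cast_eq_zero]
    rw [h2.1, h2.2, hlast]
    ring
  · ring

theorem diagonal_ite_eq_indexDiagonal [CharP R p] :
    (diagonal fun i : Fin p => if (i : ℕ) = p - 1 then 0 else ((i : ℕ) + 1 : R)) =
      indexDiagonal R p := by
  refine congrArg diagonal (funext fun i => ?_)
  split_ifs with h
  · rw [h, ← Nat.cast_add_one, Nat.sub_add_cancel (by omega), CharP.cast_eq_zero]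
  · rfl

end CyclicShift

/-- `𝔤` is realised by its faithful restricted representation in `𝔤𝔩_p`, whose `p`-operation is
the `p`-th matrix power. -/
theorem sercombe_example_solvable_not_nilpotent_no_pNilpotent
    (k : Type) [Field k] (p : ℕ) [Fact p.Prime] [CharP k p]
    (a : k) (ha : ∀ b : k, b ^ p ≠ a) :
    let X : Matrix (Fin p) (Fin p) k := 1
    let Y : Matrix (Fin p) (Fin p) k := Matrix.of fun i j =>
      if (i : ℕ) = (j : ℕ) + 1 then 1
      else if (i : ℕ) = 0 ∧ (j : ℕ) = p - 1 then a else 0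
    let Z : Matrix (Fin p) (Fin p) k :=
      Matrix.diagonal fun i => if (i : ℕ) = p - 1 then 0 else ((i : ℕ) + 1 : k)
    let L : LieSubalgebra k (Matrix (Fin p) (Fin p) k) :=
      LieSubalgebra.lieSpan k (Matrix (Fin p) (Fin p) k) {X, Y, Z}
    LieAlgebra.IsSolvable L ∧ ¬ LieRing.IsNilpotent L ∧
      ∀ M ∈ L, (∃ n : ℕ, M ^ (p ^ n) = 0) → M = 0 := by
  intro X Y Z L
  have hXY : ⁅X, Y⁆ = 0 := (Commute.one_left Y).lie_eq
  have hXZ : ⁅X, Z⁆ = 0 := (Commute.one_left Z).lie_eq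
  have hZY : ⁅Z, Y⁆ = Y := by
    rw [show Z = indexDiagonal k p from diagonal_ite_eq_indexDiagonal]
    exact lie_indexDiagonal_cyclicShift a
  have hY0 : Y ≠ 0 := cyclicShift_ne_zero a (Fact.out : p.Prime).one_lt
  refine ⟨isSolvable_lieSpan_triple hXY hXZ hZY, ?_, fun M hM ⟨n, hn⟩ => ?_⟩
  · exact LieAlgebra.not_isNilpotent_of_lie_eq_self k
      (y := ⟨Y, LieSubalgebra.subset_lieSpan (by simp)⟩)
      (z := ⟨Z, LieSubalgebra.subset_lieSpan (by simp)⟩)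
      (fun h => hY0 (congrArg Subtype.val h)) (Subtype.ext hZY)
  · have hM' : M ∈ Submodule.span k {X, Y, Z} := by
      rwa [← coe_lieSpan_triple hXY hXZ hZY]
    exact eq_zero_of_isNilpotent_of_mem_span (Y := Y) ha (cyclicShift_pow_self a) hY0 hZY hM'
      ⟨_, hn⟩
end
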